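/- arXiv:1701.07216 — 2 statements merged into one kernel-verified Lean document; each statement's English description precedes it below -/
import Mathlib

section
/- For every n ≥ 1, the sum over all alternative tableaux T of size n in which every column contains an up arrow, of a^{top(T)} b^{urr(T)-1}, equals the rising factorial (a+b)_{n-1}, where top(T) is the number of arrows in the topmost row and urr(T) is the number of rows containing no left arrow. -/
open Finset Polynomial
open scoped Classical

/-! ### Tree-like tableaux (grid model)
A cell is a pair (row index, column index), both 0-based.  A Ferrers diagram
is a finite lower set of cells.  A tree-like tableau of size `n` is a pair
`(F, P)` where `P` is the set of pointed cells of the diagram `F`. -/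

def IsFerrersGrid (F : Finset (ℕ × ℕ)) : Prop :=
  ∀ p ∈ F, ∀ i j : ℕ, i ≤ p.1 → j ≤ p.2 → (i, j) ∈ F

def IsTLT (F P : Finset (ℕ × ℕ)) : Prop :=
  F.Nonempty ∧ IsFerrersGrid F ∧ P ⊆ F ∧ (0, 0) ∈ P ∧
  (∀ p ∈ P, p ≠ (0, 0) →
    Xor' (∃ i < p.1, (i, p.2) ∈ P) (∃ j < p.2, (p.1, j) ∈ P)) ∧
  (∀ p ∈ F, ∃ q ∈ P, q.1 = p.1) ∧
  (∀ p ∈ F, ∃ q ∈ P, q.2 = p.2)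

/-- The finite set of tree-like tableaux of size `n`. -/
noncomputable def TLT (n : ℕ) : Finset (Finset (ℕ × ℕ) × Finset (ℕ × ℕ)) :=
  ((Finset.range n ×ˢ Finset.range n).powerset ×ˢ
    (Finset.range n ×ˢ Finset.range n).powerset).filter
    (fun T => IsTLT T.1 T.2 ∧ T.2.card = n)

/-- number of non-root points in the topmost row -/
noncomputable def topT (P : Finset (ℕ × ℕ)) : ℕ :=
  (P.filter (fun p => p.1 = 0 ∧ p.2 ≠ 0)).card
/-- number of non-root points in the leftmost column -/
noncomputable def leftT (P : Finset (ℕ × ℕ)) : ℕ :=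
  (P.filter (fun p => p.2 = 0 ∧ p.1 ≠ 0)).card
/-- corners of a Ferrers diagram -/
noncomputable def cornersT (F : Finset (ℕ × ℕ)) : Finset (ℕ × ℕ) :=
  F.filter (fun p => (p.1 + 1, p.2) ∉ F ∧ (p.1, p.2 + 1) ∉ F)
/-- non-occupied corners -/
noncomputable def nocT (F P : Finset (ℕ × ℕ)) : ℕ :=
  ((cornersT F).filter (fun p => p ∉ P)).card
/-- occupied corners -/
noncomputable def ocT (F P : Finset (ℕ × ℕ)) : ℕ :=
  ((cornersT F).filter (fun p => p ∈ P)).card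
/-- symmetric (invariant under reflection across the main diagonal) -/
def IsSymTLT (F P : Finset (ℕ × ℕ)) : Prop :=
  F.image Prod.swap = F ∧ P.image Prod.swap = P

/-! ### Alternative tableaux (border-label model)
A Ferrers diagram of size `n` (empty rows and columns allowed) is encoded by
the set `C ⊆ {1,…,n}` of its column labels (labels of the south-east border
steps, read from north-east to south-west); the remaining labels are row
labels.  Row `r` and column `c` intersect in a cell (written `(r, c)`)
exactly when `r < c`.  Inside a row, cells further to the left have *larger*
column labels; inside a column, cells further up have *smaller* row labels.
An alternative tableau is `(C, L, U)` where `L` (resp. `U`) is the set of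
cells containing a left (resp. up) arrow. -/

def IsAT (n : ℕ) (C : Finset ℕ) (L U : Finset (ℕ × ℕ)) : Prop :=
  C ⊆ Finset.Icc 1 n ∧ Disjoint L U ∧
  (∀ p ∈ L ∪ U, p.1 ∈ Finset.Icc 1 n ∧ p.1 ∉ C ∧ p.2 ∈ C ∧ p.1 < p.2) ∧
  (∀ p ∈ L, ∀ c' : ℕ, p.2 < c' → (p.1, c') ∉ L ∪ U) ∧
  (∀ p ∈ U, ∀ r' : ℕ, r' < p.1 → (r', p.2) ∉ L ∪ U)

/-- the finite set of alternative tableaux of size `n` -/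
noncomputable def ATset (n : ℕ) :
    Finset (Finset ℕ × Finset (ℕ × ℕ) × Finset (ℕ × ℕ)) :=
  ((Finset.Icc 1 n).powerset ×ˢ
    ((Finset.Icc 1 n ×ˢ Finset.Icc 1 n).powerset ×ˢ
      (Finset.Icc 1 n ×ˢ Finset.Icc 1 n).powerset)).filter
    (fun T => IsAT n T.1 T.2.1 T.2.2)

/-- alternative tableaux of size `n` in which every column contains an up arrow -/
noncomputable def ATstar (n : ℕ) :
    Finset (Finset ℕ × Finset (ℕ × ℕ) × Finset (ℕ × ℕ)) :=
  (ATset n).filter (fun T => ∀ c ∈ T.1, ∃ p ∈ T.2.2, p.2 = c)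

/-- label of the topmost row -/
noncomputable def topRowA (n : ℕ) (C : Finset ℕ) : ℕ :=
  ((Finset.Icc 1 n \ C).min).untopD 0
/-- number of arrows in the topmost row -/
noncomputable def topA (n : ℕ) (C : Finset ℕ) (L U : Finset (ℕ × ℕ)) : ℕ :=
  ((L ∪ U).filter (fun p => p.1 = topRowA n C)).card
/-- number of unrestricted rows (rows with no left arrow) -/
noncomputable def urrA (n : ℕ) (C : Finset ℕ) (L : Finset (ℕ × ℕ)) : ℕ :=
  ((Finset.Icc 1 n \ C).filter (fun r => ∀ p ∈ L, p.1 ≠ r)).card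
/-- number of non-occupied corners (the corners are exactly the cells `(c-1, c)`
with `c` a column label and `c-1` a row label) -/
noncomputable def nocA (n : ℕ) (C : Finset ℕ) (L U : Finset (ℕ × ℕ)) : ℕ :=
  (C.filter (fun c => c - 1 ∈ Finset.Icc 1 n \ C ∧ (c - 1, c) ∉ L ∪ U)).card
/-- symmetric alternative tableau of size `2n` (reflection across the main
diagonal exchanges border label `k` with `2n+1-k`, rows with columns and
left arrows with up arrows) -/
def IsSymAT (n : ℕ) (C : Finset ℕ) (L U : Finset (ℕ × ℕ)) : Prop :=
  (∀ k ∈ Finset.Icc 1 (2 * n), (k ∈ C ↔ (2 * n + 1 - k) ∉ C)) ∧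
  (∀ r c : ℕ, (r, c) ∈ L ↔ (2 * n + 1 - c, 2 * n + 1 - r) ∈ U)

/-! ### Linked partitions (linear representation / arc model)
A linked partition of `{1,…,n}` is identified with its set of arcs `(i, j)`,
`i < j`: each vertex is the right-hand endpoint of at most one arc. -/

def IsLP (n : ℕ) (A : Finset (ℕ × ℕ)) : Prop :=
  (∀ p ∈ A, 1 ≤ p.1 ∧ p.1 < p.2 ∧ p.2 ≤ n) ∧
  (∀ p ∈ A, ∀ q ∈ A, p.2 = q.2 → p.1 = q.1)

noncomputable def LP (n : ℕ) : Finset (Finset (ℕ × ℕ)) :=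
  ((Finset.Icc 1 n ×ˢ Finset.Icc 1 n).powerset).filter (IsLP n)

/-- number of origins plus singletons (= vertices with no incoming arc) -/
noncomputable def osL (n : ℕ) (A : Finset (ℕ × ℕ)) : ℕ :=
  ((Finset.Icc 1 n).filter (fun j => ∀ p ∈ A, p.2 ≠ j)).card
/-- number of arcs with left-hand endpoint `1` -/
noncomputable def oneL (A : Finset (ℕ × ℕ)) : ℕ :=
  (A.filter (fun p => p.1 = 1)).card
/-- a destination: only a right-hand endpoint -/
def IsDest (A : Finset (ℕ × ℕ)) (j : ℕ) : Prop :=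
  (∃ p ∈ A, p.2 = j) ∧ ∀ p ∈ A, p.1 ≠ j

/-- consecutive pairs of a finite set of naturals -/
noncomputable def consecPairs (S : Finset ℕ) : Finset (ℕ × ℕ) :=
  (S ×ˢ S).filter (fun p => p.1 < p.2 ∧ ∀ k ∈ S, ¬(p.1 < k ∧ k < p.2))

/-- the set of row labels of cells of column `c` containing an arrow -/
noncomputable def colRows (L U : Finset (ℕ × ℕ)) (c : ℕ) : Finset ℕ :=
  ((L ∪ U).filter (fun p => p.2 = c)).image Prod.fst

/-- the map `Φ`: for each column `j`, with the up arrow in row `i₁` and the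
left arrows in rows `i₂ < … < i_t`, draw the arcs `(i₁,i₂), …, (i_{t-1},i_t), (i_t, j)`,
i.e. the consecutive pairs of `{i₁,…,i_t, j}`. -/
noncomputable def Phi (T : Finset ℕ × Finset (ℕ × ℕ) × Finset (ℕ × ℕ)) :
    Finset (ℕ × ℕ) :=
  T.1.biUnion (fun c => consecPairs (insert c (colRows T.2.1 T.2.2 c)))

/-! ### Type B alternative tableaux
Encoded by `(C, L, U)` with `C ⊆ Icc 1 n` the set of column labels of the
subdiagram; rows of the shifted diagram are labelled by
`(Icc 1 n \ C) ∪ (-C)`, rows higher up having smaller labels.  Row `x` and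
column `c` intersect in a cell exactly when (`x > 0` and `x < c`) or
(`x < 0` and `-x ≤ c`); the cell `(-c, c)` is the diagonal cell of row `-c`. -/

def cellB (n : ℕ) (C : Finset ℤ) (x c : ℤ) : Prop :=
  c ∈ C ∧ ((1 ≤ x ∧ x ≤ (n : ℤ) ∧ x ∉ C ∧ x < c) ∨ (x < 0 ∧ -x ∈ C ∧ -x ≤ c))

def IsATB (n : ℕ) (C : Finset ℤ) (L U : Finset (ℤ × ℤ)) : Prop :=
  C ⊆ Finset.Icc 1 (n : ℤ) ∧ Disjoint L U ∧
  (∀ p ∈ L ∪ U, p.2 ∈ C ∧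
    ((1 ≤ p.1 ∧ p.1 ≤ (n : ℤ) ∧ p.1 ∉ C ∧ p.1 < p.2) ∨
      (p.1 < 0 ∧ -p.1 ∈ C ∧ -p.1 < p.2))) ∧
  (∀ p ∈ L, ∀ c' : ℤ, p.2 < c' → (p.1, c') ∉ L ∪ U) ∧
  (∀ p ∈ U, ∀ x' : ℤ, x' < p.1 → (x', p.2) ∉ L ∪ U) ∧
  (∀ i ∈ C, (∃ p ∈ U, p.2 = i) → ∀ c' : ℤ, (-i, c') ∉ L ∪ U)

noncomputable def ATB (n : ℕ) :
    Finset (Finset ℤ × Finset (ℤ × ℤ) × Finset (ℤ × ℤ)) :=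
  ((Finset.Icc (1 : ℤ) (n : ℤ)).powerset ×ˢ
    ((Finset.Icc (-(n : ℤ)) (n : ℤ) ×ˢ Finset.Icc (1 : ℤ) (n : ℤ)).powerset ×ˢ
      (Finset.Icc (-(n : ℤ)) (n : ℤ) ×ˢ Finset.Icc (1 : ℤ) (n : ℤ)).powerset)).filter
    (fun T => IsATB n T.1 T.2.1 T.2.2)

/-- the row labels of a type B alternative tableau -/
noncomputable def rowsB (n : ℕ) (C : Finset ℤ) : Finset ℤ :=
  (Finset.Icc (1 : ℤ) (n : ℤ) \ C) ∪ C.image (fun c => -c)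

/-- number of unrestricted rows: row `x` is unrestricted when it contains no
left arrow and column `|x|` (if it exists) contains no up arrow -/
noncomputable def urrB (n : ℕ) (C : Finset ℤ) (L U : Finset (ℤ × ℤ)) : ℕ :=
  ((rowsB n C).filter (fun x => (∀ p ∈ L, p.1 ≠ x) ∧ ∀ p ∈ U, p.2 ≠ |x|)).card

/-- the corners of the shifted Ferrers diagram -/
noncomputable def cornersB (n : ℕ) (C : Finset ℤ) : Finset (ℤ × ℤ) :=
  (Finset.Icc (-(n : ℤ)) (n : ℤ) ×ˢ Finset.Icc (1 : ℤ) (n : ℤ)).filter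
    (fun p => cellB n C p.1 p.2 ∧ (∀ x' : ℤ, p.1 < x' → ¬ cellB n C x' p.2) ∧
      (∀ c' : ℤ, c' < p.2 → ¬ cellB n C p.1 c'))

/-- number of non-occupied diagonal corners -/
noncomputable def nocDiagB (n : ℕ) (C : Finset ℤ) (L U : Finset (ℤ × ℤ)) : ℕ :=
  ((cornersB n C).filter (fun p => p.1 = -p.2 ∧ p ∉ L ∪ U)).card
/-- number of non-occupied non-diagonal corners -/
noncomputable def nocOffB (n : ℕ) (C : Finset ℤ) (L U : Finset (ℤ × ℤ)) : ℕ :=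
  ((cornersB n C).filter (fun p => p.1 ≠ -p.2 ∧ p ∉ L ∪ U)).card

/-! ### Type B linked partitions
A pair `(V, A)`: for each `i ∈ {1,…,n}` exactly one of `i, -i` belongs to
the vertex set `V`; `A` is the set of arcs `(x, y)`, `x < y`, with each
vertex the right-hand endpoint of at most one arc. -/

def IsLPB (n : ℕ) (V : Finset ℤ) (A : Finset (ℤ × ℤ)) : Prop :=
  (∀ v ∈ V, 1 ≤ |v| ∧ |v| ≤ (n : ℤ)) ∧
  (∀ i ∈ Finset.Icc (1 : ℤ) (n : ℤ), ((i ∈ V ∧ -i ∉ V) ∨ (-i ∈ V ∧ i ∉ V))) ∧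
  (∀ p ∈ A, p.1 ∈ V ∧ p.2 ∈ V ∧ p.1 < p.2) ∧
  (∀ p ∈ A, ∀ q ∈ A, p.2 = q.2 → p.1 = q.1)

noncomputable def LPB (n : ℕ) : Finset (Finset ℤ × Finset (ℤ × ℤ)) :=
  ((Finset.Icc (-(n : ℤ)) (n : ℤ)).powerset ×ˢ
    (Finset.Icc (-(n : ℤ)) (n : ℤ) ×ˢ Finset.Icc (-(n : ℤ)) (n : ℤ)).powerset).filter
    (fun T => IsLPB n T.1 T.2)

/-- number of origins plus singletons (= vertices with no incoming arc) -/
noncomputable def osB (V : Finset ℤ) (A : Finset (ℤ × ℤ)) : ℕ :=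
  (V.filter (fun v => ∀ p ∈ A, p.2 ≠ v)).card

/-- a legal destination: `j` is only a right-hand endpoint, and its incoming
arc `(a, j)` satisfies `|a| < |j|` -/
def IsLegalDestB (A : Finset (ℤ × ℤ)) (j : ℤ) : Prop :=
  (∃ p ∈ A, p.2 = j ∧ |p.1| < |j|) ∧ ∀ p ∈ A, p.1 ≠ j

/-- consecutive pairs of a finite set of integers -/
noncomputable def consecPairsZ (S : Finset ℤ) : Finset (ℤ × ℤ) :=
  (S ×ˢ S).filter (fun p => p.1 < p.2 ∧ ∀ k ∈ S, ¬(p.1 < k ∧ k < p.2))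

/-- row labels of cells of column `c` containing an arrow -/
noncomputable def colRowsB (L U : Finset (ℤ × ℤ)) (c : ℤ) : Finset ℤ :=
  ((L ∪ U).filter (fun p => p.2 = c)).image Prod.fst

/-- column `c` contains an up arrow -/
def HasUp (U : Finset (ℤ × ℤ)) (c : ℤ) : Prop := ∃ p ∈ U, p.2 = c

/-- the map `Φ_B`: columns with an up arrow give positive vertices and chains
of arcs through their arrows (consecutive pairs of the arrow rows together
with the column label); columns without an up arrow give negative vertices
`-j` and arcs from `-j` to each row containing a left arrow of that column;
rows give positive vertices. -/
noncomputable def PhiB (n : ℕ) (T : Finset ℤ × Finset (ℤ × ℤ) × Finset (ℤ × ℤ)) :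
    Finset ℤ × Finset (ℤ × ℤ) :=
  ((Finset.Icc (1 : ℤ) (n : ℤ) \ T.1) ∪ T.1.filter (fun c => HasUp T.2.2 c) ∪
      (T.1.filter (fun c => ¬ HasUp T.2.2 c)).image (fun c => -c),
    (T.1.filter (fun c => HasUp T.2.2 c)).biUnion
        (fun c => consecPairsZ (insert c (colRowsB T.2.1 T.2.2 c))) ∪
      (T.1.filter (fun c => ¬ HasUp T.2.2 c)).biUnion
        (fun c => (colRowsB T.2.1 T.2.2 c).image (fun r => (-c, r))))

/-! Gluing the border step `n + 1` to `T ∈ 𝒜𝒯*_n` along a set `W` of unrestricted rows of `T` is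
a bijection onto `𝒜𝒯*_{n+1}`: for `W = ∅` the label `n + 1` becomes an empty bottom row, otherwise
a new leftmost column with an up arrow in the topmost row of `W` and left arrows in the other rows
of `W`; conversely, in `𝒜𝒯*` the up arrow of a column is always its topmost arrow, so the last
column is recovered from its set of arrow rows. Row `1` never carries a left arrow, so it is always
unrestricted; the new column puts an arrow in it exactly when `1 ∈ W`, and `urr` becomes
`urr T + 1 - |W|`. Summing `a^[1 ∈ W] b^(urr T - |W|)` over `W` gives `(a + b) (b + 1)^(urr T - 1)`,
so the sum `F_n(a, b)` of the theorem satisfies `F_{n+1}(a, b) = (a + b) F_n(a, b + 1)`, the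
recursion `(x)_n = x (x + 1)_{n-1}` of the rising factorial at `x = a + b`. -/

theorem sum_powerset_ite_mul_pow {R ι : Type*} [CommSemiring R] [DecidableEq ι] {S : Finset ι}
    {x : ι} (hx : x ∈ S) (a b : R) :
    ∑ W ∈ S.powerset, (if x ∈ W then a else 1) * b ^ (#S - #W) = (a + b) * (b + 1) ^ (#S - 1) := by
  obtain ⟨S, hxS, rfl⟩ : ∃ S', x ∉ S' ∧ insert x S' = S :=
    ⟨S.erase x, notMem_erase x S, insert_erase hx⟩
  have without_x : ∀ W ∈ S.powerset,
      (if x ∈ W then a else 1) * b ^ (#S + 1 - #W) = b * (1 ^ #W * b ^ (#S - #W)) := by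
    intro W hW
    have hWS := mem_powerset.1 hW
    rw [if_neg fun h => hxS (hWS h), Nat.sub_add_comm (card_le_card hWS), pow_succ]
    ring
  have with_x : ∀ W ∈ S.powerset, (if x ∈ insert x W then a else 1) *
      b ^ (#S + 1 - #(insert x W)) = a * (1 ^ #W * b ^ (#S - #W)) := by
    intro W hW
    rw [if_pos (mem_insert_self x W), card_insert_of_notMem fun h => hxS (mem_powerset.1 hW h),
      Nat.add_sub_add_right]
    ring
  rw [sum_powerset_insert hxS, card_insert_of_notMem hxS, Nat.add_sub_cancel,
    sum_congr rfl without_x, sum_congr rfl with_x, ← mul_sum, ← mul_sum, sum_pow_mul_eq_add_pow]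
  ring

theorem card_filter_exists_lt_add_one {α : Type*} [LinearOrder α] {W : Finset α}
    (hne : W.Nonempty) : #{r ∈ W | ∃ s ∈ W, s < r} + 1 = #W := by
  have : {r ∈ W | ∃ s ∈ W, s < r} = W.erase (W.min' hne) := by
    ext r
    simp only [mem_filter, mem_erase]
    constructor
    · rintro ⟨hr, s, hs, hsr⟩
      exact ⟨((W.min'_le s hs).trans_lt hsr).ne', hr⟩
    · rintro ⟨hr_ne, hr⟩
      exact ⟨hr, W.min' hne, W.min'_mem hne, lt_of_le_of_ne (W.min'_le r hr) (Ne.symm hr_ne)⟩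
  rw [this, card_erase_add_one (W.min'_mem hne)]

abbrev ATTriple := Finset ℕ × Finset (ℕ × ℕ) × Finset (ℕ × ℕ)

def ColumnsHaveUp (C : Finset ℕ) (U : Finset (ℕ × ℕ)) : Prop :=
  ∀ c ∈ C, ∃ p ∈ U, p.2 = c

def unrestrictedRows (n : ℕ) (C : Finset ℕ) (L : Finset (ℕ × ℕ)) : Finset ℕ :=
  {r ∈ Icc 1 n \ C | ∀ p ∈ L, p.1 ≠ r}

theorem urrA_eq_card (n : ℕ) (C : Finset ℕ) (L : Finset (ℕ × ℕ)) :
    urrA n C L = #(unrestrictedRows n C L) := rfl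

theorem mem_unrestrictedRows {n r : ℕ} {C : Finset ℕ} {L : Finset (ℕ × ℕ)} :
    r ∈ unrestrictedRows n C L ↔ (1 ≤ r ∧ r ≤ n) ∧ r ∉ C ∧ ∀ p ∈ L, p.1 ≠ r := by
  simp only [unrestrictedRows, mem_filter, mem_sdiff, mem_Icc, and_assoc]

theorem mem_colRows {L U : Finset (ℕ × ℕ)} {c r : ℕ} : r ∈ colRows L U c ↔ (r, c) ∈ L ∪ U := by
  simp [colRows]

theorem mem_ATstar {n : ℕ} {T : ATTriple} :
    T ∈ ATstar n ↔ IsAT n T.1 T.2.1 T.2.2 ∧ ColumnsHaveUp T.1 T.2.2 := by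
  refine ⟨fun h => ⟨(mem_filter.1 (mem_filter.1 h).1).2, (mem_filter.1 h).2⟩, ?_⟩
  rintro ⟨hT, hup⟩
  have hbox : T.2.1 ∪ T.2.2 ⊆ Icc 1 n ×ˢ Icc 1 n := fun p hp =>
    mem_product.2 ⟨(hT.2.2.1 p hp).1, hT.1 (hT.2.2.1 p hp).2.2.1⟩
  refine mem_filter.2 ⟨mem_filter.2 ⟨?_, hT⟩, hup⟩
  simp only [mem_product, mem_powerset]
  exact ⟨hT.1, subset_union_left.trans hbox, subset_union_right.trans hbox⟩

section

variable {n : ℕ} {C : Finset ℕ} {L U : Finset (ℕ × ℕ)}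

theorem IsAT.col_le (hT : IsAT n C L U) {p : ℕ × ℕ} (hp : p ∈ L ∪ U) : p.2 ≤ n :=
  (mem_Icc.1 (hT.1 (hT.2.2.1 p hp).2.2.1)).2

theorem IsAT.col_ne_succ (hT : IsAT n C L U) {p : ℕ × ℕ} (hp : p ∈ L ∪ U) : p.2 ≠ n + 1 :=
  (Nat.lt_succ_of_le (hT.col_le hp)).ne

theorem IsAT.succ_notMem (hT : IsAT n C L U) : n + 1 ∉ C :=
  fun h => by have := (mem_Icc.1 (hT.1 h)).2; omega

theorem IsAT.exists_up_above (hT : IsAT n C L U) (hup : ColumnsHaveUp C U) {p : ℕ × ℕ}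
    (hp : p ∈ L) : ∃ q ∈ U, q.2 = p.2 ∧ q.1 < p.1 := by
  obtain ⟨q, hq, hq2⟩ := hup p.2 (hT.2.2.1 p (mem_union_left _ hp)).2.2.1
  refine ⟨q, hq, hq2, lt_of_le_of_ne (not_lt.1 fun hlt => ?_) fun heq => ?_⟩
  · exact hT.2.2.2.2 q hq p.1 hlt (hq2 ▸ mem_union_left _ hp)
  · exact disjoint_left.1 hT.2.1 hp (Prod.ext heq.symm hq2.symm ▸ hq)

theorem IsAT.mem_left_iff (hT : IsAT n C L U) (hup : ColumnsHaveUp C U) {r c : ℕ} :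
    (r, c) ∈ L ↔ r ∈ colRows L U c ∧ ∃ s ∈ colRows L U c, s < r := by
  simp only [mem_colRows]
  refine ⟨fun h => ⟨mem_union_left _ h, ?_⟩, fun ⟨h, s, hs, hsr⟩ => ?_⟩
  · obtain ⟨q, hq, hq2, hq1⟩ := hT.exists_up_above hup h
    exact ⟨q.1, mem_union_right _ (by rwa [← show q.2 = c from hq2]), hq1⟩
  · exact (mem_union.1 h).resolve_right fun hU => hT.2.2.2.2 _ hU s hsr hs

theorem IsAT.mem_up_iff (hT : IsAT n C L U) (hup : ColumnsHaveUp C U) {r c : ℕ} :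
    (r, c) ∈ U ↔ r ∈ colRows L U c ∧ ¬∃ s ∈ colRows L U c, s < r := by
  rw [mem_colRows]
  refine ⟨fun h => ⟨mem_union_right _ h, fun ⟨s, hs, hsr⟩ => ?_⟩, fun ⟨h, hmin⟩ => ?_⟩
  · exact hT.2.2.2.2 _ h s hsr (mem_colRows.1 hs)
  · exact (mem_union.1 h).resolve_left fun hL => hmin ((hT.mem_left_iff hup).1 hL).2

theorem IsAT.one_notMem (hT : IsAT n C L U) (hup : ColumnsHaveUp C U) : 1 ∉ C := by
  intro h1
  obtain ⟨q, hq, hq2⟩ := hup 1 h1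
  obtain ⟨hq1, -, -, hlt⟩ := hT.2.2.1 q (mem_union_right _ hq)
  have := (mem_Icc.1 hq1).1
  omega

theorem IsAT.one_mem_unrestrictedRows (hn : 1 ≤ n) (hT : IsAT n C L U)
    (hup : ColumnsHaveUp C U) : 1 ∈ unrestrictedRows n C L := by
  refine mem_unrestrictedRows.2 ⟨⟨le_rfl, hn⟩, hT.one_notMem hup, fun p hp h1 => ?_⟩
  obtain ⟨q, hq, -, hlt⟩ := hT.exists_up_above hup hp
  have := (mem_Icc.1 (hT.2.2.1 q (mem_union_right _ hq)).1).1
  omega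

theorem topRowA_eq_one (hn : 1 ≤ n) (h1 : 1 ∉ C) : topRowA n C = 1 := by
  have hmin : (Icc 1 n \ C).min = (1 : ℕ) :=
    le_antisymm (min_le (mem_sdiff.2 ⟨mem_Icc.2 ⟨le_rfl, hn⟩, h1⟩))
      (Finset.le_min fun r hr => WithTop.coe_le_coe.2 (mem_Icc.1 (mem_sdiff.1 hr).1).1)
  simp [topRowA, hmin]

end

def addStep (n : ℕ) (W : Finset ℕ) (T : ATTriple) : ATTriple :=
  (if W = ∅ then T.1 else insert (n + 1) T.1,
   T.2.1 ∪ {r ∈ W | ∃ s ∈ W, s < r} ×ˢ {n + 1},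
   T.2.2 ∪ {r ∈ W | ¬∃ s ∈ W, s < r} ×ˢ {n + 1})

def removeStep (n : ℕ) (T : ATTriple) : ATTriple :=
  (T.1.erase (n + 1), {p ∈ T.2.1 | p.2 ≠ n + 1}, {p ∈ T.2.2 | p.2 ≠ n + 1})

section

variable {n : ℕ} {C : Finset ℕ} {L U : Finset (ℕ × ℕ)} {W : Finset ℕ}

theorem mem_addStep_fst {T : ATTriple} {c : ℕ} :
    c ∈ (addStep n W T).1 ↔ c ∈ T.1 ∨ W.Nonempty ∧ c = n + 1 := by
  simp only [addStep]
  split_ifs with h <;> simp [h, nonempty_iff_ne_empty, or_comm]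

theorem addStep_arrows (n : ℕ) (W : Finset ℕ) (T : ATTriple) :
    (addStep n W T).2.1 ∪ (addStep n W T).2.2 = (T.2.1 ∪ T.2.2) ∪ W ×ˢ {n + 1} := by
  dsimp only [addStep]
  rw [union_union_union_comm, ← union_product, filter_union_filter_not_eq]

theorem isAT_addStep (hT : IsAT n C L U) (hW : W ⊆ unrestrictedRows n C L) :
    IsAT (n + 1) (addStep n W (C, L, U)).1 (addStep n W (C, L, U)).2.1
      (addStep n W (C, L, U)).2.2 := by
  have hcol : ∀ p ∈ L ∪ U, p.2 ≤ n := fun p hp => hT.col_le hp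
  have hWrow : ∀ r ∈ W, (1 ≤ r ∧ r ≤ n) ∧ r ∉ C ∧ ∀ p ∈ L, p.1 ≠ r :=
    fun r hr => mem_unrestrictedRows.1 (hW hr)
  obtain ⟨hC, hLU, hcell, hL, hU⟩ := hT
  rw [IsAT, addStep_arrows]
  refine ⟨fun c hc => ?_, disjoint_left.2 fun p hpL hpU => ?_, fun p hp => ?_,
    fun p hp c' hc' hmem => ?_, fun p hp r' hr' hmem => ?_⟩
  · rcases mem_addStep_fst.1 hc with hc | ⟨-, rfl⟩
    · exact Icc_subset_Icc le_rfl n.le_succ (hC hc)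
    · simp
  · simp only [addStep, mem_union, mem_product, mem_filter, mem_singleton] at hpL hpU
    rcases hpL with hpL | ⟨⟨-, s, hsW, hsp⟩, hp2⟩
    · rcases hpU with hpU | ⟨-, hp2⟩
      · exact disjoint_left.1 hLU hpL hpU
      · have := hcol p (mem_union_left _ hpL); omega
    · rcases hpU with hpU | ⟨⟨-, hmin⟩, -⟩
      · have := hcol p (mem_union_right _ hpU); omega
      · exact hmin ⟨s, hsW, hsp⟩
  · rcases mem_union.1 hp with hold | hnew
    · obtain ⟨h1, h2, h3, h4⟩ := hcell p hold
      have := hcol p hold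
      exact ⟨Icc_subset_Icc le_rfl n.le_succ h1,
        fun h => (mem_addStep_fst.1 h).elim h2 fun ⟨_, h'⟩ => by omega,
        mem_addStep_fst.2 (Or.inl h3), h4⟩
    · obtain ⟨hpW, hp2⟩ := mem_product.1 hnew
      rw [mem_singleton] at hp2
      obtain ⟨⟨h1, h2⟩, h3, -⟩ := hWrow p.1 hpW
      exact ⟨mem_Icc.2 ⟨h1, by omega⟩,
        fun h => (mem_addStep_fst.1 h).elim h3 fun ⟨_, h'⟩ => by omega,
        mem_addStep_fst.2 (Or.inr ⟨⟨_, hpW⟩, hp2⟩), by omega⟩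
  · simp only [addStep, mem_union, mem_product, mem_filter, mem_singleton] at hp hmem
    rcases hmem with hold | ⟨hrow, hc⟩
    · rcases hp with hpL | ⟨-, hp2⟩
      · exact hL p hpL c' hc' (mem_union.2 hold)
      · have := hcol _ (mem_union.2 hold); omega
    · rcases hp with hpL | ⟨-, hp2⟩
      · exact (hWrow p.1 hrow).2.2 p hpL rfl
      · omega
  · simp only [addStep, mem_union, mem_product, mem_filter, mem_singleton] at hp hmem
    rcases hmem with hold | ⟨hr'W, hc⟩
    · rcases hp with hpU | ⟨-, hp2⟩
      · exact hU p hpU r' hr' (mem_union.2 hold)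
      · have := hcol _ (mem_union.2 hold); omega
    · rcases hp with hpU | ⟨⟨-, hmin⟩, -⟩
      · have := hcol p (mem_union_right _ hpU); omega
      · exact hmin ⟨r', hr'W, hr'⟩
theorem columnsHaveUp_addStep (hup : ColumnsHaveUp C U) :
    ColumnsHaveUp (addStep n W (C, L, U)).1 (addStep n W (C, L, U)).2.2 := by
  intro c hc
  rcases mem_addStep_fst.1 hc with hc | ⟨hne, rfl⟩
  · obtain ⟨p, hp, hpc⟩ := hup c hc
    exact ⟨p, mem_union_left _ hp, hpc⟩
  · refine ⟨(W.min' hne, n + 1), mem_union_right _ (mem_product.2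
      ⟨mem_filter.2 ⟨W.min'_mem hne, ?_⟩, mem_singleton_self _⟩), rfl⟩
    rintro ⟨s, hs, hlt⟩
    exact (W.min'_le s hs).not_gt hlt

theorem isAT_removeStep (hT : IsAT (n + 1) C L U) :
    IsAT n (removeStep n (C, L, U)).1 (removeStep n (C, L, U)).2.1
      (removeStep n (C, L, U)).2.2 := by
  obtain ⟨hC, hLU, hcell, hL, hU⟩ := hT
  have hsub : {p ∈ L | p.2 ≠ n + 1} ∪ {p ∈ U | p.2 ≠ n + 1} ⊆ L ∪ U :=
    union_subset_union (filter_subset _ _) (filter_subset _ _)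
  refine ⟨fun c hc => ?_, hLU.mono (filter_subset _ _) (filter_subset _ _), fun p hp => ?_,
    fun p hp c' hc' hmem => hL p (mem_filter.1 hp).1 c' hc' (hsub hmem),
    fun p hp r' hr' hmem => hU p (mem_filter.1 hp).1 r' hr' (hsub hmem)⟩
  · obtain ⟨hne, hc⟩ := mem_erase.1 hc
    have := mem_Icc.1 (hC hc)
    exact mem_Icc.2 ⟨this.1, by omega⟩
  · have hne : p.2 ≠ n + 1 := by
      rcases mem_union.1 hp with h | h <;> exact (mem_filter.1 h).2
    obtain ⟨h1, h2, h3, h4⟩ := hcell p (hsub hp)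
    have := mem_Icc.1 (hC h3)
    exact ⟨mem_Icc.2 ⟨(mem_Icc.1 h1).1, by omega⟩, fun h => h2 (mem_of_mem_erase h),
      mem_erase.2 ⟨hne, h3⟩, h4⟩

theorem columnsHaveUp_removeStep (hup : ColumnsHaveUp C U) :
    ColumnsHaveUp (removeStep n (C, L, U)).1 (removeStep n (C, L, U)).2.2 := by
  intro c hc
  obtain ⟨hne, hc⟩ := mem_erase.1 hc
  obtain ⟨p, hp, rfl⟩ := hup c hc
  exact ⟨p, mem_filter.2 ⟨hp, hne⟩, rfl⟩

theorem colRows_subset_unrestrictedRows (hT : IsAT (n + 1) C L U) :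
    colRows L U (n + 1) ⊆ unrestrictedRows n (removeStep n (C, L, U)).1
      (removeStep n (C, L, U)).2.1 := by
  intro r hr
  have hrc := mem_colRows.1 hr
  obtain ⟨h1, h2, -, h4⟩ := hT.2.2.1 _ hrc
  simp only [removeStep, unrestrictedRows, mem_filter, mem_sdiff, mem_Icc, mem_erase]
  refine ⟨⟨⟨(mem_Icc.1 h1).1, by omega⟩, fun h => h2 h.2⟩, fun p hp hpr => ?_⟩
  have := hT.col_le (mem_union_left _ hp.1)
  exact hT.2.2.2.1 p hp.1 (n + 1) (by omega) (hpr ▸ hrc)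

theorem removeStep_addStep (hT : IsAT n C L U) :
    removeStep n (addStep n W (C, L, U)) = (C, L, U) := by
  have hnew (S : Finset ℕ) : {p ∈ S ×ˢ {n + 1} | p.2 ≠ n + 1} = ∅ :=
    filter_false_of_mem fun p hp => by simpa using (mem_product.1 hp).2
  simp only [removeStep, addStep, filter_union, hnew, union_empty, Prod.mk.injEq]
  refine ⟨by split_ifs <;> simp [hT.succ_notMem], filter_true_of_mem fun p hp => ?_,
    filter_true_of_mem fun p hp => ?_⟩
  · exact hT.col_ne_succ (mem_union_left _ hp)
  · exact hT.col_ne_succ (mem_union_right _ hp)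

theorem colRows_addStep (hT : IsAT n C L U) :
    colRows (addStep n W (C, L, U)).2.1 (addStep n W (C, L, U)).2.2 (n + 1) = W := by
  ext r
  rw [mem_colRows, addStep_arrows, mem_union, mem_product, mem_singleton]
  have := hT.col_ne_succ (p := (r, n + 1))
  tauto

theorem addStep_removeStep (hT : IsAT (n + 1) C L U) (hup : ColumnsHaveUp C U) :
    addStep n (colRows L U (n + 1)) (removeStep n (C, L, U)) = (C, L, U) := by
  simp only [addStep, removeStep, Prod.mk.injEq]
  refine ⟨?_, ?_, ?_⟩
  · split_ifs with h0
    · refine erase_eq_of_notMem fun hC => ?_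
      obtain ⟨q, hq, hq2⟩ := hup _ hC
      exact eq_empty_iff_forall_notMem.1 h0 q.1 (mem_colRows.2 (hq2 ▸ mem_union_right _ hq))
    · obtain ⟨r, hr⟩ := nonempty_iff_ne_empty.2 h0
      exact insert_erase (hT.2.2.1 _ (mem_colRows.1 hr)).2.2.1
  · ext ⟨r, c⟩
    simp only [mem_union, mem_filter, mem_product, mem_singleton]
    by_cases hc : c = n + 1
    · subst hc
      simp [hT.mem_left_iff hup]
    · simp [hc]
  · ext ⟨r, c⟩
    simp only [mem_union, mem_filter, mem_product, mem_singleton]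
    by_cases hc : c = n + 1
    · subst hc
      simp [hT.mem_up_iff hup]
    · simp [hc]

theorem topA_addStep (hn : 1 ≤ n) (hT : IsAT n C L U) (hup : ColumnsHaveUp C U) :
    topA (n + 1) (addStep n W (C, L, U)).1 (addStep n W (C, L, U)).2.1
      (addStep n W (C, L, U)).2.2 = topA n C L U + if 1 ∈ W then 1 else 0 := by
  have h1 : 1 ∉ (addStep n W (C, L, U)).1 := fun h =>
    (mem_addStep_fst.1 h).elim (hT.one_notMem hup) fun ⟨_, h'⟩ => by omega
  have hnew : {p ∈ W ×ˢ {n + 1} | p.1 = 1} = if 1 ∈ W then {(1, n + 1)} else ∅ := by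
    ext ⟨r, c⟩
    split_ifs with h <;> simp only [mem_filter, mem_product, mem_singleton, Prod.mk.injEq] <;>
      grind
  rw [topA, topA, topRowA_eq_one (by omega) h1, topRowA_eq_one hn (hT.one_notMem hup),
    addStep_arrows, filter_union, card_union_of_disjoint, hnew, apply_ite card, card_singleton,
    card_empty]
  refine disjoint_left.2 fun p hp hq => hT.col_ne_succ (mem_filter.1 hp).1 ?_
  simpa using (mem_product.1 (mem_filter.1 hq).1).2

theorem unrestrictedRows_succ (hT : IsAT n C L U) :
    unrestrictedRows (n + 1) C L = insert (n + 1) (unrestrictedRows n C L) := by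
  have hrow : ∀ p ∈ L, p.1 < n + 1 := fun p hp => by
    have := (hT.2.2.1 p (mem_union_left _ hp)).2.2.2
    have := hT.col_le (mem_union_left _ hp)
    omega
  have := hT.succ_notMem
  ext r
  simp only [mem_insert, mem_unrestrictedRows]
  grind

theorem unrestrictedRows_addStep (h0 : W ≠ ∅) :
    unrestrictedRows (n + 1) (addStep n W (C, L, U)).1 (addStep n W (C, L, U)).2.1 =
      unrestrictedRows n C L \ {r ∈ W | ∃ s ∈ W, s < r} := by
  ext r
  simp only [addStep, if_neg h0, mem_unrestrictedRows, mem_sdiff, mem_insert, mem_union,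
    mem_product, mem_singleton]
  constructor
  · rintro ⟨⟨h1, h2⟩, hC, hrow⟩
    exact ⟨⟨⟨h1, by omega⟩, fun h => hC (Or.inr h), fun p hp => hrow p (Or.inl hp)⟩,
      fun hF => hrow (r, n + 1) (Or.inr ⟨hF, rfl⟩) rfl⟩
  · rintro ⟨⟨⟨h1, h2⟩, hC, hrow⟩, hF⟩
    refine ⟨⟨h1, by omega⟩, by rintro (h | h) <;> [omega; exact hC h], ?_⟩
    rintro p (hp | ⟨hpF, -⟩) rfl
    · exact hrow p hp rfl
    · exact hF hpF

theorem urrA_addStep_add_card (hT : IsAT n C L U) (hW : W ⊆ unrestrictedRows n C L) :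
    urrA (n + 1) (addStep n W (C, L, U)).1 (addStep n W (C, L, U)).2.1 + #W =
      urrA n C L + 1 := by
  rw [urrA_eq_card, urrA_eq_card]
  by_cases h0 : W = ∅
  · subst h0
    have hn1 : n + 1 ∉ unrestrictedRows n C L := by simp [unrestrictedRows]
    simp [addStep, unrestrictedRows_succ hT, card_insert_of_notMem hn1]
  · rw [unrestrictedRows_addStep h0, card_sdiff_of_subset ((filter_subset _ W).trans hW)]
    have := card_filter_exists_lt_add_one (nonempty_iff_ne_empty.2 h0)
    have := card_le_card hW
    omega

end

theorem sum_ATstar_succ {M : Type*} [AddCommMonoid M] (n : ℕ) (f : ATTriple → M) :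
    ∑ T ∈ ATstar (n + 1), f T =
      ∑ T ∈ ATstar n, ∑ W ∈ (unrestrictedRows n T.1 T.2.1).powerset, f (addStep n W T) := by
  rw [sum_sigma']
  refine (sum_nbij' (fun x : Σ _ : ATTriple, Finset ℕ => addStep n x.2 x.1)
    (fun T => ⟨removeStep n T, colRows T.2.1 T.2.2 (n + 1)⟩) ?_ ?_ ?_ ?_ fun _ _ => rfl).symm
  · rintro ⟨⟨C, L, U⟩, W⟩ hx
    obtain ⟨hT, hW⟩ := mem_sigma.1 hx
    obtain ⟨hT, hup⟩ := mem_ATstar.1 hT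
    exact mem_ATstar.2 ⟨isAT_addStep hT (mem_powerset.1 hW), columnsHaveUp_addStep hup⟩
  · rintro ⟨C, L, U⟩ hT
    obtain ⟨hT, hup⟩ := mem_ATstar.1 hT
    exact mem_sigma.2 ⟨mem_ATstar.2 ⟨isAT_removeStep hT, columnsHaveUp_removeStep hup⟩,
      mem_powerset.2 (colRows_subset_unrestrictedRows hT)⟩
  · rintro ⟨⟨C, L, U⟩, W⟩ hx
    have hT := (mem_ATstar.1 (mem_sigma.1 hx).1).1
    simp only [removeStep_addStep hT, colRows_addStep hT]
  · rintro ⟨C, L, U⟩ hT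
    obtain ⟨hT, hup⟩ := mem_ATstar.1 hT
    exact addStep_removeStep hT hup

theorem ATstar_one : ATstar 1 = {(∅, ∅, ∅)} := by
  ext ⟨C, L, U⟩
  rw [mem_ATstar, mem_singleton]
  constructor
  · rintro ⟨hT, hup⟩
    have hC : C = ∅ := eq_empty_of_forall_notMem fun c hc => by
      obtain rfl : c = 1 := by have := mem_Icc.1 (hT.1 hc); omega
      exact hT.one_notMem hup hc
    have hLU (p : ℕ × ℕ) (hp : p ∈ L ∪ U) : False := by
      simpa [hC] using (hT.2.2.1 p hp).2.2.1
    simp only [hC, Prod.mk.injEq, true_and]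
    exact ⟨eq_empty_of_forall_notMem fun p hp => hLU p (mem_union_left _ hp),
      eq_empty_of_forall_notMem fun p hp => hLU p (mem_union_right _ hp)⟩
  · rintro ⟨⟩
    simp [IsAT, ColumnsHaveUp]

theorem sum_ATstar_succ_weight {R : Type*} [CommSemiring R] {n : ℕ} (hn : 1 ≤ n) (a b : R) :
    ∑ T ∈ ATstar (n + 1), a ^ topA (n + 1) T.1 T.2.1 T.2.2 * b ^ (urrA (n + 1) T.1 T.2.1 - 1) =
      (a + b) * ∑ T ∈ ATstar n, a ^ topA n T.1 T.2.1 T.2.2 * (b + 1) ^ (urrA n T.1 T.2.1 - 1) := by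
  rw [sum_ATstar_succ, mul_sum]
  refine sum_congr rfl fun ⟨C, L, U⟩ hT => ?_
  obtain ⟨hT, hup⟩ := mem_ATstar.1 hT
  have hweight : ∀ W ∈ (unrestrictedRows n C L).powerset,
      a ^ topA (n + 1) (addStep n W (C, L, U)).1 (addStep n W (C, L, U)).2.1
          (addStep n W (C, L, U)).2.2 *
        b ^ (urrA (n + 1) (addStep n W (C, L, U)).1 (addStep n W (C, L, U)).2.1 - 1) =
      a ^ topA n C L U * ((if 1 ∈ W then a else 1) * b ^ (#(unrestrictedRows n C L) - #W)) := by
    intro W hW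
    have hurr : urrA (n + 1) (addStep n W (C, L, U)).1 (addStep n W (C, L, U)).2.1 + #W =
        #(unrestrictedRows n C L) + 1 := urrA_addStep_add_card hT (mem_powerset.1 hW)
    rw [topA_addStep hn hT hup, show urrA (n + 1) (addStep n W (C, L, U)).1
      (addStep n W (C, L, U)).2.1 - 1 = #(unrestrictedRows n C L) - #W by omega, pow_add]
    split_ifs <;> simp [mul_assoc]
  rw [sum_congr rfl hweight, ← mul_sum,
    sum_powerset_ite_mul_pow (hT.one_mem_unrestrictedRows hn hup), urrA_eq_card]
  ring

theorem sum_ATstar_weight_eq_ascPochhammer {R : Type*} [CommSemiring R] (m : ℕ) (a b : R) :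
    ∑ T ∈ ATstar (m + 1), a ^ topA (m + 1) T.1 T.2.1 T.2.2 * b ^ (urrA (m + 1) T.1 T.2.1 - 1) =
      (ascPochhammer R m).eval (a + b) := by
  induction m generalizing b with
  | zero => simp [ATstar_one, topA, urrA]
  | succ m ih =>
    rw [sum_ATstar_succ_weight (Nat.le_add_left 1 m), ih, ascPochhammer_succ_left]
    simp [add_assoc]

/-- for `n ≥ 1`,
`∑_{T ∈ 𝒜𝒯*_n} a^{top T} b^{urr T - 1} = (a+b)_{n-1}`. -/
theorem atstar_enumeration (n : ℕ) (hn : 1 ≤ n) (a b : ℤ) :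
    ∑ T ∈ ATstar n, a ^ topA n T.1 T.2.1 T.2.2 * b ^ (urrA n T.1 T.2.1 - 1) =
      (ascPochhammer ℤ (n - 1)).eval (a + b) := by
  obtain ⟨m, rfl⟩ := Nat.exists_eq_add_of_le' hn
  exact sum_ATstar_weight_eq_ascPochhammer m a b
end

section
/- For n ≥ 3 and 3 ≤ i ≤ n, let M_{n,i} be the set of linked partitions of {1,...,n} in which vertex i is a destination and (i-1, i) is not an arc. Then the sum over τ in M_{n,i} of a^{one(τ)} b^{os(τ)-1} equals (i-3+a)·(a+b)_{n-2}. -/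
open Finset Polynomial
open scoped Classical

/-!
Deleting vertex `n + 1` identifies `LP (n + 1)` with `LP n × {0, …, n}`, the second coordinate
being the source of the arc into `n + 1` (`0` for none). Under this identification the weight
`a ^ one * b ^ (os - 1)` is multiplied by `b`, `a` or `1` according as the source is `0`, `1` or
larger, so the full weighted sum over `LP n` is `(a + b)_(n - 1)`. When `n = i`, the vertex `i`
of `M_{i,i}` must receive an arc from some `k ∉ {0, i - 1}`, which contributes the factor
`a + (i - 3)`; for `n ≥ i` the new vertex `n + 1` may take any source but `i`, which contributes
the factor `a + b + (n - 2)`.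
-/

lemma mem_LP {n : ℕ} {A : Finset (ℕ × ℕ)} : A ∈ LP n ↔ IsLP n A := by
  rw [LP, mem_filter, mem_powerset]
  refine ⟨And.right, fun h => ⟨fun p hp => ?_, h⟩⟩
  obtain ⟨h1, h2, h3⟩ := h.1 p hp
  exact mem_product.2 ⟨mem_Icc.2 ⟨h1, by omega⟩, mem_Icc.2 ⟨by omega, h3⟩⟩

/-- Adds vertex `n + 1` with incoming arc `(k, n + 1)`; `k = 0` means no incoming arc. -/
def extendLP (n : ℕ) (A : Finset (ℕ × ℕ)) (k : ℕ) : Finset (ℕ × ℕ) :=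
  if k = 0 then A else insert (k, n + 1) A

/-- The source of the arc into `j`, and `0` if there is none. -/
def arcSourceInto (B : Finset (ℕ × ℕ)) (j : ℕ) : ℕ :=
  (B.filter (·.2 = j)).sup Prod.fst

section extendLP

variable {n k : ℕ} {A : Finset (ℕ × ℕ)}

lemma mem_extendLP_of_snd_ne {q : ℕ × ℕ} (hq : q.2 ≠ n + 1) :
    q ∈ extendLP n A k ↔ q ∈ A := by
  unfold extendLP
  split_ifs
  · rfl
  · rw [mem_insert, or_iff_right]
    rintro rfl
    exact hq rfl

lemma mem_extendLP_top (h : IsLP n A) (j : ℕ) :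
    (j, n + 1) ∈ extendLP n A k ↔ k ≠ 0 ∧ j = k := by
  have hA : (j, n + 1) ∉ A := fun hj => by have := h.1 _ hj; omega
  unfold extendLP
  split_ifs with hk <;> simp [hA, hk]

lemma isLP_extendLP (h : IsLP n A) (hk : k ≤ n) : IsLP (n + 1) (extendLP n A k) := by
  unfold extendLP
  split_ifs with hk0
  · exact ⟨fun p hp => by have := h.1 p hp; omega, h.2⟩
  refine ⟨fun p hp => ?_, fun p hp q hq hpq => ?_⟩
  · rcases mem_insert.1 hp with rfl | hp
    · dsimp only; omega
    · have := h.1 p hp; omega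
  · rcases mem_insert.1 hp with rfl | hp <;> rcases mem_insert.1 hq with rfl | hq
    · rfl
    · have := h.1 q hq; dsimp only at hpq; omega
    · have := h.1 p hp; dsimp only at hpq; omega
    · exact h.2 p hp q hq hpq

lemma filter_snd_ne_extendLP (h : IsLP n A) :
    (extendLP n A k).filter (·.2 ≠ n + 1) = A := by
  ext q
  by_cases hq : q.2 = n + 1
  · have : q ∉ A := fun hqA => by have := h.1 q hqA; omega
    simp [hq, this]
  · simp [hq, mem_extendLP_of_snd_ne hq]

lemma arcSourceInto_extendLP (h : IsLP n A) : arcSourceInto (extendLP n A k) (n + 1) = k := by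
  have : (extendLP n A k).filter (·.2 = n + 1) = if k = 0 then ∅ else {(k, n + 1)} := by
    ext ⟨j, l⟩
    by_cases hl : l = n + 1
    · subst hl
      rw [mem_filter, mem_extendLP_top h]
      split_ifs <;> simp [*, eq_comm]
    · split_ifs <;> simp [hl]
  rw [arcSourceInto, this]
  split_ifs with hk <;> simp [hk]

lemma isDest_extendLP_top (h : IsLP n A) (hk : k ≤ n) :
    IsDest (extendLP n A k) (n + 1) ↔ k ≠ 0 := by
  have hnoOut : ∀ p ∈ extendLP n A k, p.1 ≠ n + 1 := fun p hp => by
    have := (isLP_extendLP h hk).1 p hp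
    omega
  refine ⟨fun ⟨⟨⟨j, l⟩, hp, hl⟩, _⟩ => ?_, fun hk0 => ⟨⟨_, (mem_extendLP_top h k).2 ⟨hk0, rfl⟩,
    rfl⟩, hnoOut⟩⟩
  dsimp only at hl
  subst hl
  exact ((mem_extendLP_top h j).1 hp).1

lemma isDest_extendLP_of_le {j : ℕ} (hj : 1 ≤ j) (hjn : j ≤ n) :
    IsDest (extendLP n A k) j ↔ IsDest A j ∧ k ≠ j := by
  have hin : (∃ p ∈ extendLP n A k, p.2 = j) ↔ ∃ p ∈ A, p.2 = j :=
    exists_congr fun _ => and_congr_left fun _ => mem_extendLP_of_snd_ne (by omega)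
  have hout : (∀ p ∈ extendLP n A k, p.1 ≠ j) ↔ (∀ p ∈ A, p.1 ≠ j) ∧ k ≠ j := by
    unfold extendLP
    split_ifs with hk0
    · exact (and_iff_left (by omega)).symm
    · rw [forall_mem_insert, and_comm]
  rw [IsDest, IsDest, hin, hout, and_assoc]

end extendLP

section restrict

variable {n : ℕ} {B : Finset (ℕ × ℕ)}

lemma isLP_filter_snd_ne (h : IsLP (n + 1) B) : IsLP n (B.filter (·.2 ≠ n + 1)) := by
  refine ⟨fun p hp => ?_, fun p hp q hq => h.2 p (mem_filter.1 hp).1 q (mem_filter.1 hq).1⟩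
  have := h.1 p (mem_filter.1 hp).1
  have := (mem_filter.1 hp).2
  omega

lemma arcSourceInto_le (h : IsLP (n + 1) B) : arcSourceInto B (n + 1) ≤ n :=
  Finset.sup_le fun p hp => by
    have := h.1 p (mem_filter.1 hp).1
    have := (mem_filter.1 hp).2
    omega

lemma mem_iff_arcSourceInto (h : IsLP (n + 1) B) (j : ℕ) :
    (j, n + 1) ∈ B ↔ arcSourceInto B (n + 1) ≠ 0 ∧ j = arcSourceInto B (n + 1) := by
  constructor
  · intro hj
    have hsingle : B.filter (·.2 = n + 1) = {(j, n + 1)} := by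
      refine eq_singleton_iff_unique_mem.2 ⟨mem_filter.2 ⟨hj, rfl⟩, fun p hp => ?_⟩
      obtain ⟨hpB, hp⟩ := mem_filter.1 hp
      exact Prod.ext (h.2 p hpB _ hj hp) hp
    have := h.1 _ hj
    rw [arcSourceInto, hsingle, sup_singleton]
    exact ⟨by omega, rfl⟩
  · rintro ⟨hne, rfl⟩
    have hnonempty : (B.filter (·.2 = n + 1)).Nonempty := by
      by_contra hempty
      rw [not_nonempty_iff_eq_empty] at hempty
      exact hne (by rw [arcSourceInto, hempty, sup_empty]; rfl)
    obtain ⟨p, hp, hsup⟩ := exists_mem_eq_sup _ hnonempty Prod.fst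
    obtain ⟨hpB, hp⟩ := mem_filter.1 hp
    rwa [arcSourceInto, hsup, ← hp]

lemma extendLP_filter_arcSourceInto (h : IsLP (n + 1) B) :
    extendLP n (B.filter (·.2 ≠ n + 1)) (arcSourceInto B (n + 1)) = B := by
  ext ⟨j, l⟩
  by_cases hl : l = n + 1
  · subst hl
    rw [mem_extendLP_top (isLP_filter_snd_ne h), mem_iff_arcSourceInto h]
  · rw [mem_extendLP_of_snd_ne hl, mem_filter]
    exact and_iff_left hl

end restrict

theorem sum_LP_succ {M : Type*} [AddCommMonoid M] (n : ℕ) (f : Finset (ℕ × ℕ) → M) :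
    ∑ B ∈ LP (n + 1), f B = ∑ A ∈ LP n, ∑ k ∈ range (n + 1), f (extendLP n A k) := by
  rw [← sum_product']
  refine sum_nbij' (fun B => (B.filter (·.2 ≠ n + 1), arcSourceInto B (n + 1)))
    (fun x => extendLP n x.1 x.2) (fun B hB => ?_) (fun x hx => ?_) (fun B hB => ?_)
    (fun x hx => ?_) (fun B hB => ?_)
  · have h := mem_LP.1 hB
    exact mem_product.2 ⟨mem_LP.2 (isLP_filter_snd_ne h), mem_range.2 (by
      have := arcSourceInto_le h; omega)⟩
  · obtain ⟨hA, hk⟩ := mem_product.1 hx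
    exact mem_LP.2 (isLP_extendLP (mem_LP.1 hA) (by have := mem_range.1 hk; omega))
  · exact extendLP_filter_arcSourceInto (mem_LP.1 hB)
  · have hA := mem_LP.1 (mem_product.1 hx).1
    exact Prod.ext (filter_snd_ne_extendLP hA) (arcSourceInto_extendLP hA)
  · exact congrArg f (extendLP_filter_arcSourceInto (mem_LP.1 hB)).symm

section weight

variable {R : Type*} [CommRing R] (a b : R)

noncomputable def lpWeight (n : ℕ) (A : Finset (ℕ × ℕ)) : R :=
  a ^ oneL A * b ^ (osL n A - 1)

def arcWeight (k : ℕ) : R :=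
  if k = 0 then b else if k = 1 then a else 1

variable {n k : ℕ} {A : Finset (ℕ × ℕ)}

lemma one_le_osL (hn : 1 ≤ n) (h : IsLP n A) : 1 ≤ osL n A :=
  card_pos.2 ⟨1, mem_filter.2 ⟨mem_Icc.2 ⟨le_rfl, hn⟩,
    fun p hp hp1 => by have := h.1 p hp; omega⟩⟩

lemma oneL_extendLP (h : IsLP n A) :
    oneL (extendLP n A k) = oneL A + if k = 1 then 1 else 0 := by
  have hA : (k, n + 1) ∉ A := fun hk => by have := h.1 _ hk; omega
  unfold oneL extendLP
  split_ifs with h0 h1 h1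
  · omega
  · rfl
  · subst h1
    rw [filter_insert, if_pos rfl, card_insert_of_notMem fun hk => hA (mem_filter.1 hk).1]
  · rw [filter_insert, if_neg h1, add_zero]

lemma osL_extendLP (h : IsLP n A) :
    osL (n + 1) (extendLP n A k) = osL n A + if k = 0 then 1 else 0 := by
  have hincoming : ∀ j ∈ Icc 1 n,
      (∀ p ∈ extendLP n A k, p.2 ≠ j) ↔ ∀ p ∈ A, p.2 ≠ j := by
    intro j hj
    have hjn := (mem_Icc.1 hj).2
    refine ⟨fun H p hp hpj => H p ((mem_extendLP_of_snd_ne (by omega)).2 hp) hpj,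
      fun H p hp hpj => H p ((mem_extendLP_of_snd_ne (by omega)).1 hp) hpj⟩
  have htop : (∀ p ∈ extendLP n A k, p.2 ≠ n + 1) ↔ k = 0 := by
    refine ⟨fun H => ?_, fun hk p hp hpn => ?_⟩
    · by_contra hk
      exact H _ ((mem_extendLP_top h k).2 ⟨hk, rfl⟩) rfl
    · rw [extendLP, if_pos hk] at hp
      have := h.1 p hp
      omega
  have hnotMem : n + 1 ∉ (Icc 1 n).filter (fun j => ∀ p ∈ A, p.2 ≠ j) := by simp
  rw [osL, osL, ← insert_Icc_right_eq_Icc_add_one (by omega), filter_insert,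
    filter_congr hincoming, if_congr htop rfl rfl]
  split_ifs
  · exact card_insert_of_notMem hnotMem
  · rfl

lemma lpWeight_extendLP (hn : 1 ≤ n) (h : IsLP n A) :
    lpWeight a b (n + 1) (extendLP n A k) = lpWeight a b n A * arcWeight a b k := by
  have hos := one_le_osL hn h
  rw [lpWeight, lpWeight, arcWeight, oneL_extendLP h, osL_extendLP h]
  obtain rfl | rfl | hk : k = 0 ∨ k = 1 ∨ 2 ≤ k := by omega
  · rw [if_neg zero_ne_one, if_pos rfl, if_pos rfl, Nat.add_sub_cancel, add_zero, mul_assoc,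
      ← pow_succ, Nat.sub_add_cancel hos]
  · simp only [if_pos, if_neg one_ne_zero, add_zero, pow_succ]
    ring
  · simp only [if_neg (show k ≠ 0 by omega), if_neg (show k ≠ 1 by omega), add_zero, mul_one]

lemma arcWeight_of_two_le (hk : 2 ≤ k) : arcWeight a b k = 1 := by
  rw [arcWeight, if_neg (by omega), if_neg (by omega)]

lemma sum_range_arcWeight (hn : 1 ≤ n) :
    ∑ k ∈ range (n + 1), arcWeight a b k = a + b + ((n - 1 : ℕ) : R) := by
  obtain ⟨m, rfl⟩ : ∃ m, n = m + 1 := ⟨n - 1, by omega⟩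
  rw [sum_range_succ', sum_range_succ',
    sum_congr rfl fun k _ => arcWeight_of_two_le a b (k := k + 1 + 1) (by omega)]
  simp [arcWeight]
  ring

lemma sum_filter_LP_succ_lpWeight (hn : 1 ≤ n) (P : Finset (ℕ × ℕ) → Prop) [DecidablePred P] :
    ∑ B ∈ (LP (n + 1)).filter P, lpWeight a b (n + 1) B =
      ∑ A ∈ LP n, lpWeight a b n A *
        ∑ k ∈ (range (n + 1)).filter (fun k => P (extendLP n A k)), arcWeight a b k := by
  rw [sum_filter, sum_LP_succ]
  refine sum_congr rfl fun A hA => ?_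
  rw [mul_sum, sum_filter]
  refine sum_congr rfl fun k _ => ?_
  rw [lpWeight_extendLP a b hn (mem_LP.1 hA)]

lemma LP_one : LP 1 = {∅} := by
  ext A
  rw [mem_LP, mem_singleton, eq_empty_iff_forall_notMem]
  refine ⟨fun h p hp => by have := h.1 p hp; omega, ?_⟩
  intro h
  exact ⟨fun p hp => absurd hp (h p), fun p hp => absurd hp (h p)⟩

theorem sum_lpWeight_LP (hn : 1 ≤ n) :
    ∑ A ∈ LP n, lpWeight a b n A = (ascPochhammer R (n - 1)).eval (a + b) := by
  induction n, hn using Nat.le_induction with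
  | base => simp [LP_one, lpWeight, oneL, osL]
  | succ n hn ih =>
    have hsucc := sum_filter_LP_succ_lpWeight a b hn (fun _ => True)
    simp only [filter_true] at hsucc
    rw [hsucc, ← sum_mul, ih, sum_range_arcWeight a b hn, show n + 1 - 1 = n - 1 + 1 by omega,
      ascPochhammer_succ_eval]

theorem sum_lpWeight_filter_isDest_self {i : ℕ} (hi : 3 ≤ i) :
    ∑ B ∈ (LP i).filter (fun B => IsDest B i ∧ (i - 1, i) ∉ B), lpWeight a b i B =
      ((i : R) - 3 + a) * (ascPochhammer R (i - 2)).eval (a + b) := by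
  obtain ⟨m, rfl⟩ : ∃ m, i = m + 1 := ⟨i - 1, by omega⟩
  have hchoice : ∀ A ∈ LP m,
      (range (m + 1)).filter (fun k => IsDest (extendLP m A k) (m + 1) ∧
        (m + 1 - 1, m + 1) ∉ extendLP m A k) = ((range (m + 1)).erase 0).erase m := by
    intro A hA
    ext k
    by_cases hk : k ≤ m
    · simp only [mem_filter, mem_erase, mem_range, Nat.add_sub_cancel,
        isDest_extendLP_top (mem_LP.1 hA) hk, mem_extendLP_top (mem_LP.1 hA)]
      omega
    · simp [show ¬ k < m + 1 by omega]
  rw [sum_filter_LP_succ_lpWeight a b (by omega), sum_congr rfl fun A hA => by rw [hchoice A hA],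
    ← sum_mul, sum_lpWeight_LP a b (by omega),
    sum_erase_eq_sub (mem_erase.2 ⟨by omega, mem_range.2 (by omega)⟩),
    sum_erase_eq_sub (mem_range.2 (by omega)), sum_range_arcWeight a b (by omega),
    arcWeight_of_two_le a b (k := m) (by omega), show arcWeight a b 0 = b from if_pos rfl,
    show m + 1 - 2 = m - 1 by omega]
  push_cast [show 1 ≤ m by omega]
  ring

theorem sum_lpWeight_filter_isDest_succ {i : ℕ} (hi : 3 ≤ i) (hin : i ≤ n) :
    ∑ B ∈ (LP (n + 1)).filter (fun B => IsDest B i ∧ (i - 1, i) ∉ B), lpWeight a b (n + 1) B =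
      (∑ A ∈ (LP n).filter (fun A => IsDest A i ∧ (i - 1, i) ∉ A), lpWeight a b n A) *
        (a + b + ((n - 2 : ℕ) : R)) := by
  have hchoice : ∀ A : Finset (ℕ × ℕ),
      (range (n + 1)).filter (fun k => IsDest (extendLP n A k) i ∧
        (i - 1, i) ∉ extendLP n A k) =
      if IsDest A i ∧ (i - 1, i) ∉ A then (range (n + 1)).erase i else ∅ := by
    intro A
    ext k
    have hmem : (i - 1, i) ∈ extendLP n A k ↔ (i - 1, i) ∈ A := mem_extendLP_of_snd_ne (by omega)
    rw [mem_filter, isDest_extendLP_of_le (by omega) hin, hmem]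
    split_ifs with hA
    · rw [mem_erase]
      tauto
    · simp only [notMem_empty]
      tauto
  rw [sum_filter_LP_succ_lpWeight a b (by omega), sum_filter, sum_mul]
  refine sum_congr rfl fun A _ => ?_
  rw [hchoice A]
  split_ifs
  · rw [sum_erase_eq_sub (mem_range.2 (by omega)), sum_range_arcWeight a b (by omega),
      arcWeight_of_two_le a b (k := i) (by omega)]
    push_cast [show 2 ≤ n by omega, show 1 ≤ n by omega]
    ring
  · rw [sum_empty, mul_zero, zero_mul]

end weight

theorem lp_M_enumeration_general (n i : ℕ) (hi : 3 ≤ i) (hin : i ≤ n)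
    (a b : ℤ) :
    ∑ A ∈ (LP n).filter (fun A => IsDest A i ∧ (i - 1, i) ∉ A),
        a ^ oneL A * b ^ (osL n A - 1) =
      ((i : ℤ) - 3 + a) * (ascPochhammer ℤ (n - 2)).eval (a + b) := by
  change ∑ A ∈ _, lpWeight a b n A = _
  induction n, hin using Nat.le_induction with
  | base => exact sum_lpWeight_filter_isDest_self a b hi
  | succ n hin ih =>
    rw [sum_lpWeight_filter_isDest_succ a b hi hin, ih, show n + 1 - 2 = n - 2 + 1 by omega,
      ascPochhammer_succ_eval, mul_assoc]

/-- for `3 ≤ i ≤ n`, summing over linked partitions of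
`{1,…,n}` in which `i` is a destination and `(i-1, i)` is not an arc,
`∑ a^{one τ} b^{os τ - 1} = (i - 3 + a) (a+b)_{n-2}`. -/
theorem lp_M_enumeration (n i : ℕ) (hn : 3 ≤ n) (hi : 3 ≤ i) (hin : i ≤ n)
    (a b : ℤ) :
    ∑ A ∈ (LP n).filter (fun A => IsDest A i ∧ (i - 1, i) ∉ A),
        a ^ oneL A * b ^ (osL n A - 1) =
      ((i : ℤ) - 3 + a) * (ascPochhammer ℤ (n - 2)).eval (a + b) :=
  lp_M_enumeration_general n i hi hin a b
end
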